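/- Assume f satisfies (f0)–(f4). Then f(t)·t ≥ p_*·F(t) for every real t ≠ 0. (Claim 4 in the proof of Lemma 2.3.) -/

import Mathlib

open Filter Set MeasureTheory Topology

/-! Fix `t > 0` and put `c := (f t * t - 2 F t) / t ^ q`, so that (f4) gives
`f s * s - 2 F s ≤ c s ^ q` for `0 < s ≤ t`. Since `(F s / s²)' = (f s * s - 2 F s) / s³`,
the function `φ s = F s / s² - c s ^ (q - 2) / (q - 2)` is antitone on `(0, t]`, and (f1) forces
`φ s → 0` as `s → 0⁺` (L'Hôpital). Hence `φ t ≤ 0`, which unfolds to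
`(q - 2) F t ≤ f t * t - 2 F t`. Negative `t` reduce to positive ones through `s ↦ F (-s)`. -/

lemma hasDerivAt_div_sq {f F : ℝ → ℝ} {s : ℝ} (hF : HasDerivAt F (f s) s) (hs : s ≠ 0) :
    HasDerivAt (fun u => F u / u ^ 2) ((f s * s - 2 * F s) / s ^ 3) s := by
  refine (hF.div (hasDerivAt_pow 2 s) (pow_ne_zero 2 hs)).congr_deriv ?_
  field_simp
  ring

lemma tendsto_div_sq_nhdsGT_zero {q : ℝ} (hq : 2 < q) {f F : ℝ → ℝ}
    (hF : ∀ s, HasDerivAt F (f s) s) (hF0 : F 0 = 0)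
    (hf : Tendsto (fun s => f s / |s| ^ (q - 1)) (𝓝[>] 0) (𝓝 0)) :
    Tendsto (fun s => F s / s ^ 2) (𝓝[>] 0) (𝓝 0) := by
  have hpow : Tendsto (fun s : ℝ => s ^ (q - 2) / 2) (𝓝[>] 0) (𝓝 0) := by
    have h : ContinuousAt (fun s : ℝ => s ^ (q - 2) / 2) 0 :=
      (Real.continuousAt_rpow_const 0 (q - 2) (Or.inr (by linarith))).div_const 2
    simpa [Real.zero_rpow (by linarith : q - 2 ≠ 0)] using h.tendsto.mono_left nhdsWithin_le_nhds
  have hratio : Tendsto (fun s => f s / (2 * s)) (𝓝[>] 0) (𝓝 0) := by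
    refine (zero_mul (0 : ℝ) ▸ hf.mul hpow).congr' ?_
    filter_upwards [self_mem_nhdsWithin] with s (hs : 0 < s)
    have hsplit : s ^ (q - 1) = s ^ (q - 2) * s := by
      rw [← Real.rpow_add_one hs.ne']
      ring_nf
    have : 0 < s ^ (q - 2) := Real.rpow_pos_of_pos hs _
    rw [abs_of_pos hs, hsplit]
    field_simp
  refine HasDerivAt.lhopital_zero_nhdsGT (Eventually.of_forall hF)
    (Eventually.of_forall fun s => by simpa using hasDerivAt_pow 2 s) ?_ ?_ ?_ hratio
  · filter_upwards [self_mem_nhdsWithin] with s (hs : 0 < s)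
    positivity
  · simpa [hF0] using ((hF 0).continuousAt.tendsto).mono_left nhdsWithin_le_nhds
  · simpa using ((continuous_pow 2).tendsto (0 : ℝ)).mono_left nhdsWithin_le_nhds

lemma antitoneOn_div_sq_sub_rpow {q c t : ℝ} (hq : q ≠ 2) {f F : ℝ → ℝ}
    (hF : ∀ s, HasDerivAt F (f s) s)
    (hle : ∀ s ∈ Ioc 0 t, (f s * s - 2 * F s) / s ^ q ≤ c) :
    AntitoneOn (fun s => F s / s ^ 2 - c / (q - 2) * s ^ (q - 2)) (Ioc 0 t) := by
  have hq2 : q - 2 ≠ 0 := sub_ne_zero.mpr hq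
  have hderiv : ∀ s, 0 < s → HasDerivAt (fun s => F s / s ^ 2 - c / (q - 2) * s ^ (q - 2))
      ((f s * s - 2 * F s) / s ^ 3 - c * s ^ (q - 3)) s := by
    intro s hs
    refine ((hasDerivAt_div_sq (hF s) hs.ne').sub
      ((Real.hasDerivAt_rpow_const (Or.inl hs.ne')).const_mul _)).congr_deriv ?_
    rw [show q - 2 - 1 = q - 3 by ring]
    field_simp
  have hderiv_nonpos : ∀ s ∈ Ioc 0 t, (f s * s - 2 * F s) / s ^ 3 - c * s ^ (q - 3) ≤ 0 := by
    intro s hs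
    have hsplit : s ^ q = s ^ 3 * s ^ (q - 3) := by
      rw [← Real.rpow_natCast, ← Real.rpow_add hs.1]
      norm_num
    have h := hle s hs
    rw [hsplit, ← div_div, div_le_iff₀ (Real.rpow_pos_of_pos hs.1 _)] at h
    linarith
  refine antitoneOn_of_hasDerivWithinAt_nonpos (convex_Ioc 0 t)
    (f' := fun s => (f s * s - 2 * F s) / s ^ 3 - c * s ^ (q - 3))
    (fun s hs => (hderiv s hs.1).continuousAt.continuousWithinAt) (fun s hs => ?_)
    (fun s hs => ?_)
  · rw [interior_Ioc] at hs
    exact (hderiv s hs.1).hasDerivWithinAt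
  · rw [interior_Ioc] at hs
    exact hderiv_nonpos s (Ioo_subset_Ioc_self hs)

lemma mul_le_mul_of_monotoneOn_div_rpow {q : ℝ} (hq : 2 < q) {f F : ℝ → ℝ}
    (hF : ∀ s, HasDerivAt F (f s) s) (hF0 : F 0 = 0)
    (hf : Tendsto (fun s => f s / |s| ^ (q - 1)) (𝓝[>] 0) (𝓝 0))
    (hmono : MonotoneOn (fun s => (f s * s - 2 * F s) / |s| ^ q) (Ioi 0)) {t : ℝ} (ht : 0 < t) :
    q * F t ≤ f t * t := by
  set c := (f t * t - 2 * F t) / t ^ q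
  set φ := fun s => F s / s ^ 2 - c / (q - 2) * s ^ (q - 2)
  have hanti : AntitoneOn φ (Ioc 0 t) := antitoneOn_div_sq_sub_rpow hq.ne' hF fun s hs => by
    simpa only [abs_of_pos hs.1, abs_of_pos ht] using hmono hs.1 ht hs.2
  have hφ_lim : Tendsto φ (𝓝[>] 0) (𝓝 0) := by
    have h : ContinuousAt (fun s : ℝ => c / (q - 2) * s ^ (q - 2)) 0 :=
      (Real.continuousAt_rpow_const 0 (q - 2) (Or.inr (by linarith))).const_mul _
    simpa [Real.zero_rpow (by linarith : q - 2 ≠ 0)] using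
      (tendsto_div_sq_nhdsGT_zero hq hF hF0 hf).sub (h.tendsto.mono_left nhdsWithin_le_nhds)
  have hφt : φ t ≤ 0 := by
    refine ge_of_tendsto hφ_lim ?_
    filter_upwards [Ioc_mem_nhdsGT ht] with s hs
    exact hanti hs (right_mem_Ioc.mpr ht) hs.2
  have hsplit : t ^ q = t ^ (q - 2) * t ^ 2 := by
    rw [← Real.rpow_natCast, ← Real.rpow_add ht]
    norm_num
  have : 0 < t ^ (q - 2) := Real.rpow_pos_of_pos ht _
  simp only [φ, c, hsplit] at hφt
  rw [sub_nonpos, div_le_iff₀ (by positivity)] at hφt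
  field_simp at hφt
  rw [le_div_iff₀ (by linarith)] at hφt
  linarith

lemma mul_le_mul_of_antitoneOn_div_rpow {q : ℝ} (hq : 2 < q) {f F : ℝ → ℝ}
    (hF : ∀ s, HasDerivAt F (f s) s) (hF0 : F 0 = 0)
    (hf : Tendsto (fun s => f s / |s| ^ (q - 1)) (𝓝[<] 0) (𝓝 0))
    (hanti : AntitoneOn (fun s => (f s * s - 2 * F s) / |s| ^ q) (Iio 0)) {t : ℝ} (ht : t < 0) :
    q * F t ≤ f t * t := by
  have hF_neg : ∀ s, HasDerivAt (fun u => F (-u)) (-f (-s)) s := fun s =>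
    ((hF (-s)).comp s (hasDerivAt_neg' s)).congr_deriv (mul_neg_one _)
  have hf_neg : Tendsto (fun s => -f (-s) / |s| ^ (q - 1)) (𝓝[>] 0) (𝓝 0) := by
    have h := (hf.comp (neg_zero (G := ℝ) ▸ tendsto_neg_nhdsGT_neg)).neg
    simpa [Function.comp_def, neg_div] using h
  have hmono_neg : MonotoneOn (fun s => (-f (-s) * s - 2 * F (-s)) / |s| ^ q) (Ioi 0) := by
    intro a ha b hb hab
    simpa using hanti (by simpa using hb) (by simpa using ha) (neg_le_neg hab)
  simpa using mul_le_mul_of_monotoneOn_div_rpow hq hF_neg (by simpa using hF0) hf_neg hmono_neg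
    (neg_pos.mpr ht)

theorem stmt_4_general (N : ℕ) (hN : 3 ≤ N) (p : ℝ) (hp2 : 2 ≤ p)
    (f F Ft : ℝ → ℝ) (hf0 : Continuous f)
    (hF : ∀ t : ℝ, F t = ∫ s in (0:ℝ)..t, f s)
    (hFt : ∀ t : ℝ, Ft t = f t * t - 2 * F t)
    (hf1 : Tendsto (fun t : ℝ => f t / |t| ^ (p + 2 * p / (N : ℝ) - 1)) (nhdsWithin 0 {0}ᶜ) (nhds 0))
    (hf4a : StrictAntiOn (fun t : ℝ => Ft t / |t| ^ (p + 2 * p / (N : ℝ))) (Iio 0))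
    (hf4b : StrictMonoOn (fun t : ℝ => Ft t / |t| ^ (p + 2 * p / (N : ℝ))) (Ioi 0)) :
    ∀ t : ℝ, t ≠ 0 → f t * t ≥ (p + 2 * p / (N : ℝ)) * F t := by
  have hq : 2 < p + 2 * p / (N : ℝ) := by
    have : (0 : ℝ) < N := by exact_mod_cast (by omega : 0 < N)
    have : 0 < 2 * p / (N : ℝ) := by positivity
    linarith
  have hF' : ∀ s, HasDerivAt F (f s) s := fun s => by
    rw [funext hF]
    exact (hf0.integral_hasStrictDerivAt 0 s).hasDerivAt
  have hF0 : F 0 = 0 := by rw [hF, intervalIntegral.integral_same]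
  obtain rfl : Ft = fun t => f t * t - 2 * F t := funext hFt
  intro t ht
  rcases ht.lt_or_gt with hneg | hpos
  · exact mul_le_mul_of_antitoneOn_div_rpow hq hF' hF0
      (hf1.mono_left (nhdsWithin_mono _ fun _ hs => ne_of_lt hs)) hf4a.antitoneOn hneg
  · exact mul_le_mul_of_monotoneOn_div_rpow hq hF' hF0
      (hf1.mono_left (nhdsWithin_mono _ fun _ hs => ne_of_gt hs)) hf4b.monotoneOn hpos

theorem stmt_4 (N : ℕ) (hN : 3 ≤ N) (p : ℝ) (hp2 : 2 ≤ p) (hpN : p < (N : ℝ))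
    (f F Ft : ℝ → ℝ) (hf0 : Continuous f)
    (hF : ∀ t : ℝ, F t = ∫ s in (0:ℝ)..t, f s)
    (hFt : ∀ t : ℝ, Ft t = f t * t - 2 * F t)
    (hf1 : Tendsto (fun t : ℝ => f t / |t| ^ (p + 2 * p / (N : ℝ) - 1)) (nhdsWithin 0 {0}ᶜ) (nhds 0))
    (hf2 : Tendsto (fun t : ℝ => f t / |t| ^ ((N : ℝ) * p / ((N : ℝ) - p) - 1)) (cocompact ℝ) (nhds 0))
    (hf3 : Tendsto (fun t : ℝ => F t / |t| ^ (p + 2 * p / (N : ℝ))) (cocompact ℝ) atTop)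
    (hf4a : StrictAntiOn (fun t : ℝ => Ft t / |t| ^ (p + 2 * p / (N : ℝ))) (Iio 0))
    (hf4b : StrictMonoOn (fun t : ℝ => Ft t / |t| ^ (p + 2 * p / (N : ℝ))) (Ioi 0)) :
    ∀ t : ℝ, t ≠ 0 → f t * t ≥ (p + 2 * p / (N : ℝ)) * F t :=
  stmt_4_general N hN p hp2 f F Ft hf0 hF hFt hf1 hf4a hf4b
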